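/- Let f : ℝ^d → ℝ be convex and continuously differentiable, let ν be a (σ-finite) measure on ℝ^d, and for m > 0 define F_m := {z ∈ ℝ^d | ∫ exp(−m·D_f(z, x)) dν(x) < ∞}. If F_n ≠ ∅ for some n > 0, then F_m = ℝ^d for every m > n. -/

import Mathlib

/-!
Write `D` for the Bregman divergence of `f`. Fix `z₀ ∈ F n`, `z` arbitrary, and let `w` be the
point with `(m - n) • w = m • z - n • z₀`. The gradient terms of `D · x` are affine in the first
argument, so `n D(z₀, x) - m D(z, x) = n f(z₀) - m f(z) + (m - n) (f x + ⟪∇f x, w - x⟫)`, and the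
supporting hyperplane inequality at `x` bounds this by a constant independent of `x`. Hence
`exp (-m D(z, x)) ≤ C · exp (-n D(z₀, x))`, and the integrability at `z₀` transfers to `z`.
-/

open MeasureTheory

lemma ConvexOn.apply_sub_le_of_hasFDerivAt {E : Type*} [NormedAddCommGroup E] [NormedSpace ℝ E]
    {s : Set E} {f : E → ℝ} {f' : E →L[ℝ] ℝ} {x w : E}
    (hf : ConvexOn ℝ s f) (hx : x ∈ s) (hw : w ∈ s) (hderiv : HasFDerivAt f f' x) :
    f' (w - x) ≤ f w - f x := by
  let L : ℝ →ᵃ[ℝ] E := AffineMap.lineMap x w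
  have hline : ConvexOn ℝ (L ⁻¹' s) (f ∘ L) := hf.comp_affineMap L
  have hder : HasDerivAt (f ∘ L) (f' (w - x)) 0 :=
    ((AffineMap.lineMap_apply_zero (k := ℝ) x w).symm ▸ hderiv).comp_hasDerivAt 0
      AffineMap.hasDerivAt_lineMap
  simpa [L, slope_def_field] using
    hline.le_slope_of_hasDerivAt (by simpa [L]) (by simpa [L]) zero_lt_one hder

lemma ConvexOn.inner_gradient_le_sub {E : Type*} [NormedAddCommGroup E] [InnerProductSpace ℝ E]
    [CompleteSpace E] {s : Set E} {f : E → ℝ} {x w : E}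
    (hf : ConvexOn ℝ s f) (hx : x ∈ s) (hw : w ∈ s) (hdiff : DifferentiableAt ℝ f x) :
    inner ℝ (gradient f x) (w - x) ≤ f w - f x :=
  hf.apply_sub_le_of_hasFDerivAt hx hw
    (hasGradientAt_iff_hasFDerivAt.mp hdiff.hasGradientAt)

noncomputable def bregmanDiv {E : Type*} [NormedAddCommGroup E] [InnerProductSpace ℝ E]
    [CompleteSpace E] (f : E → ℝ) (x y : E) : ℝ :=
  f x - f y - inner ℝ (gradient f y) (x - y)

lemma ConvexOn.mul_bregmanDiv_sub_mul_bregmanDiv_le {E : Type*} [NormedAddCommGroup E]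
    [InnerProductSpace ℝ E] [CompleteSpace E] {f : E → ℝ}
    (hf : ConvexOn ℝ Set.univ f) (hdiff : Differentiable ℝ f) {m n : ℝ} (hnm : n < m)
    (z₀ z x : E) :
    n * bregmanDiv f z₀ x - m * bregmanDiv f z x ≤
      (m - n) * f ((m - n)⁻¹ • (m • z - n • z₀)) + n * f z₀ - m * f z := by
  set w := (m - n)⁻¹ • (m • z - n • z₀)
  have hw : (m - n) • (w - x) = m • (z - x) - n • (z₀ - x) := by
    rw [smul_sub, smul_inv_smul₀ (sub_ne_zero.mpr hnm.ne')]
    module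
  have hinner : (m - n) * inner ℝ (gradient f x) (w - x) =
      m * inner ℝ (gradient f x) (z - x) - n * inner ℝ (gradient f x) (z₀ - x) := by
    rw [← real_inner_smul_right, hw, inner_sub_right, real_inner_smul_right,
      real_inner_smul_right]
  have hsupport := mul_le_mul_of_nonneg_left
    (hf.inner_gradient_le_sub (Set.mem_univ x) (Set.mem_univ w) (hdiff x)) (sub_pos.mpr hnm).le
  unfold bregmanDiv
  linarith

lemma lintegral_ofReal_exp_lt_top_of_le_add {α : Type*} [MeasurableSpace α] {μ : Measure α}
    {a b : α → ℝ} (c : ℝ) (hab : ∀ x, a x ≤ b x + c)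
    (hb : ∫⁻ x, ENNReal.ofReal (Real.exp (b x)) ∂μ < ⊤) :
    ∫⁻ x, ENNReal.ofReal (Real.exp (a x)) ∂μ < ⊤ :=
  calc ∫⁻ x, ENNReal.ofReal (Real.exp (a x)) ∂μ
      ≤ ∫⁻ x, ENNReal.ofReal (Real.exp c) * ENNReal.ofReal (Real.exp (b x)) ∂μ := by
        refine lintegral_mono fun x => ?_
        rw [← ENNReal.ofReal_mul (Real.exp_nonneg c), ← Real.exp_add]
        exact ENNReal.ofReal_le_ofReal (Real.exp_le_exp.mpr (by linarith [hab x]))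
    _ = ENNReal.ofReal (Real.exp c) * ∫⁻ x, ENNReal.ofReal (Real.exp (b x)) ∂μ :=
        lintegral_const_mul' _ _ ENNReal.ofReal_ne_top
    _ < ⊤ := ENNReal.mul_lt_top ENNReal.ofReal_lt_top hb

theorem finiteness_sets_all_above_general {d : ℕ}
    (f : EuclideanSpace ℝ (Fin d) → ℝ)
    (hconv : ConvexOn ℝ Set.univ f) (hf : ContDiff ℝ 1 f)
    (D : EuclideanSpace ℝ (Fin d) → EuclideanSpace ℝ (Fin d) → ℝ)
    (hD : ∀ x y, D x y = f x - f y - (inner ℝ (gradient f y) (x - y) : ℝ))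
    (ν : Measure (EuclideanSpace ℝ (Fin d)))
    (F : ℝ → Set (EuclideanSpace ℝ (Fin d)))
    (hF : ∀ m, F m = {z | ∫⁻ x, ENNReal.ofReal (Real.exp (-(m * D z x))) ∂ν < ⊤})
    (n : ℝ) (hne : (F n).Nonempty) :
    ∀ m : ℝ, n < m → F m = Set.univ := by
  intro m hnm
  obtain ⟨z₀, hz₀⟩ := hne
  obtain rfl : D = bregmanDiv f := funext₂ hD
  refine Set.eq_univ_of_forall fun z => ?_
  rw [hF, Set.mem_ofPred_eq] at hz₀ ⊢
  obtain ⟨C, hC⟩ : ∃ C, ∀ x, n * bregmanDiv f z₀ x - m * bregmanDiv f z x ≤ C :=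
    ⟨_, hconv.mul_bregmanDiv_sub_mul_bregmanDiv_le (hf.differentiable one_ne_zero) hnm z₀ z⟩
  exact lintegral_ofReal_exp_lt_top_of_le_add C (fun x => by linarith [hC x]) hz₀

/-- for a convex continuously differentiable function `f : ℝ^d → ℝ` with
Bregman divergence `D`, a σ-finite measure `ν` on `ℝ^d`, and the sets
`F m = {z | ∫ exp(-m·D(z,x)) dν(x) < ∞}`: if `F n ≠ ∅` for some `n > 0`, then
`F m = ℝ^d` for every `m > n`. -/
theorem finiteness_sets_all_above {d : ℕ}
    (f : EuclideanSpace ℝ (Fin d) → ℝ)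
    (hconv : ConvexOn ℝ Set.univ f) (hf : ContDiff ℝ 1 f)
    (D : EuclideanSpace ℝ (Fin d) → EuclideanSpace ℝ (Fin d) → ℝ)
    (hD : ∀ x y, D x y = f x - f y - (inner ℝ (gradient f y) (x - y) : ℝ))
    (ν : Measure (EuclideanSpace ℝ (Fin d))) [SigmaFinite ν]
    (F : ℝ → Set (EuclideanSpace ℝ (Fin d)))
    (hF : ∀ m, F m = {z | ∫⁻ x, ENNReal.ofReal (Real.exp (-(m * D z x))) ∂ν < ⊤})
    (n : ℝ) (hn : 0 < n) (hne : (F n).Nonempty) :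
    ∀ m : ℝ, n < m → F m = Set.univ :=
  finiteness_sets_all_above_general f hconv hf D hD ν F hF n hne
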